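/- Let Ω = U ∪ V (disjoint) with |U| = 5 and V = F₂³ the point set of AG(3,2), and let C be the code in O₇ = K(13,6) consisting of all 6-subsets α with |α ∩ U| = 2 and α ∩ V a tetrahedron (a 4-subset of F₂³ that is not an affine plane). Then |C| = 560, C has minimum distance 1 in O₇, and C₁ is exactly the set of 6-subsets β with |β ∩ U| = 3 and β ∩ V a 3-subset of F₂³; moreover the group S₅ × AGL₃(2) (acting naturally on U and V) is contained in Aut(C) and acts transitively on C and on C₁. -/

import Mathlib

open Finset

/-!
Splitting `Ω = U ⊔ V`, a 6-set is a pair of a subset of `U` and a subset of `V`, and disjointness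
is checked on each side. Codewords are pairs (2-set, tetrahedron), so `|C| = C(5,2) · 56`. A 6-set
disjoint from a codeword `(u, T)` lies in `uᶜ ⊔ Tᶜ`, which has type `(3, 4)`; hence it has type
`(3, 3)` or it is `(2-set, Tᶜ)`, again a codeword because `Tᶜ` is a tetrahedron. Conversely a
3-subset of `F₂³` misses a tetrahedron: its complement has 5 points and only one of its 4-subsets
can sum to `0`. Since `O₇` is connected, `C₁` is the set of non-codewords adjacent to `C`.
Over `F₂` four distinct points are affinely independent iff their sum is nonzero, so tetrahedra
are exactly the affine bases of `AG(3,2)`; `AGL₃(2)` is transitive on ordered affine bases, and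
every triangle extends to one, which gives both transitivity statements.
-/

abbrev KVert (Ω : Type*) [DecidableEq Ω] (k : ℕ) := {s : Finset Ω // s.card = k}

def kneser (Ω : Type*) [DecidableEq Ω] (k : ℕ) : SimpleGraph (KVert Ω k) where
  Adj a b := a ≠ b ∧ Disjoint a.1 b.1
  symm := ⟨fun a b h => ⟨h.1.symm, h.2.symm⟩⟩
  loopless := ⟨fun a h => h.1 rfl⟩

/-- The action of a permutation of `Ω` on the vertices of the Kneser graph. -/
def permV {Ω : Type*} [DecidableEq Ω] {k : ℕ} (g : Equiv.Perm Ω) (a : KVert Ω k) : KVert Ω k :=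
  ⟨a.1.map g.toEmbedding, by simp [a.2]⟩

/-- The setwise stabiliser of a code `C` inside `Sym(Ω)`. -/
def autC {Ω : Type*} [DecidableEq Ω] {k : ℕ} (C : Set (KVert Ω k)) : Set (Equiv.Perm Ω) :=
  {g | (permV g) '' C = C}

/-- `nbrs C i` is `Cᵢ`, the set of vertices at distance exactly `i` from the code `C`. -/
def nbrs {Ω : Type*} [Fintype Ω] [DecidableEq Ω] {k : ℕ} (C : Set (KVert Ω k)) (i : ℕ) :
    Set (KVert Ω k) :=
  {γ | (∃ α ∈ C, (kneser Ω k).dist α γ = i) ∧ ∀ β ∈ C, i ≤ (kneser Ω k).dist β γ}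

/-- `G` acts transitively on the set of vertices `S`. -/
def transOn {Ω : Type*} [DecidableEq Ω] {k : ℕ} (G : Set (Equiv.Perm Ω))
    (S : Set (KVert Ω k)) : Prop :=
  ∀ x ∈ S, ∀ y ∈ S, ∃ g ∈ G, permV g x = y

/-- Points of `AG(3,2)`. -/
abbrev AGPt := Fin 3 → ZMod 2

/-- The 13-element underlying set `Ω = U ⊔ V` with `|U| = 5` and `V = F₂³`. -/
abbrev Om17 := Fin 5 ⊕ AGPt

/-- The `U`-part of a subset of `Ω`. -/
def upart (α : Finset Om17) : Finset (Fin 5) :=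
  Finset.univ.filter fun i => Sum.inl i ∈ α

/-- The `V`-part of a subset of `Ω`. -/
def vpart (α : Finset Om17) : Finset AGPt :=
  Finset.univ.filter fun x => Sum.inr x ∈ α

/-- A tetrahedron: a 4-subset of `F₂³` that is not an affine plane. -/
def tetra (s : Finset AGPt) : Prop := s.card = 4 ∧ ∑ x ∈ s, x ≠ 0

section Affine
variable {ι k V P : Type*} [Ring k] [AddCommGroup V] [Module k V] [AddTorsor V P]

theorem AffineBasis.exists_affineEquiv_apply_eq (b b' : AffineBasis ι k P) :
    ∃ A : P ≃ᵃ[k] P, ∀ i, A (b i) = b' i := by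
  obtain ⟨i₀⟩ := b.nonempty
  let L := (b.basisOf i₀).equiv (b'.basisOf i₀) (Equiv.refl _)
  refine ⟨((AffineEquiv.vaddConst k (b i₀)).symm.trans L.toAffineEquiv).trans
    (AffineEquiv.vaddConst k (b' i₀)), fun i => ?_⟩
  by_cases hi : i = i₀
  · subst hi; simp
  · have := (b.basisOf i₀).equiv_apply ⟨i, hi⟩ (b'.basisOf i₀) (Equiv.refl _)
    simp only [AffineBasis.basisOf_apply, Equiv.refl_apply] at this
    simp [L, this]

theorem AffineMap.sum_apply_eq_linear_sum_add {k V₁ V₂ : Type*} [Ring k] [AddCommGroup V₁]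
    [Module k V₁] [AddCommGroup V₂] [Module k V₂] (f : V₁ →ᵃ[k] V₂) (s : Finset V₁) :
    ∑ x ∈ s, f x = f.linear (∑ x ∈ s, x) + #s • f 0 := by
  conv_lhs => rw [f.decomp]
  simp only [Pi.add_apply, sum_add_distrib, map_sum, sum_const]

end Affine

section CharTwo
variable {V : Type*} [AddCommGroup V] [Module (ZMod 2) V]

theorem affineIndependent_of_sum_ne_zero {p : Fin 4 → V} (hp : Function.Injective p)
    (hsum : ∑ i, p i ≠ 0) : AffineIndependent (ZMod 2) p := by
  rw [affineIndependent_iff_of_fintype]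
  -- An affine relation over `F₂` is an even set of points summing to `0`: two equal points, or
  -- all four.
  intro w hw hrel
  rw [Finset.weightedVSub_eq_linear_combination _ hw] at hrel
  have hne : ∀ {i j}, i ≠ j → p i + p j ≠ 0 := fun hij h =>
    hij (hp (by rwa [add_eq_zero_iff_eq_neg, ZModModule.neg_eq_self] at h))
  have h01 : ∀ a : ZMod 2, a = 0 ∨ a = 1 := by decide
  rw [Fin.sum_univ_four] at hw hrel hsum
  rcases h01 (w 0) with h0 | h0 <;> rcases h01 (w 1) with h1 | h1 <;>
    rcases h01 (w 2) with h2 | h2 <;> rcases h01 (w 3) with h3 | h3 <;>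
    simp only [h0, h1, h2, h3, zero_smul, one_smul, add_zero, zero_add] at hw hrel <;>
    first
    | exact absurd hw (by decide)
    | exact absurd hrel (hne (by decide))
    | exact absurd hrel hsum
    | exact fun i => by fin_cases i <;> assumption

theorem exists_affineEquiv_apply_eq_of_sum_ne_zero (hV : Module.finrank (ZMod 2) V = 3)
    {p q : Fin 4 → V} (hp : Function.Injective p) (hq : Function.Injective q)
    (hps : ∑ i, p i ≠ 0) (hqs : ∑ i, q i ≠ 0) :
    ∃ A : V ≃ᵃ[ZMod 2] V, ∀ i, A (p i) = q i := by
  have : FiniteDimensional (ZMod 2) V := Module.finite_of_finrank_eq_succ hV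
  have basis : ∀ {p : Fin 4 → V}, Function.Injective p → ∑ i, p i ≠ 0 →
      ∃ b : AffineBasis (Fin 4) (ZMod 2) V, ⇑b = p := fun {p} hp hps =>
    have hind := affineIndependent_of_sum_ne_zero hp hps
    ⟨⟨p, hind, by rw [hind.affineSpan_eq_top_iff_card_eq_finrank_add_one, hV]; rfl⟩, rfl⟩
  obtain ⟨b, rfl⟩ := basis hp hps
  obtain ⟨b', rfl⟩ := basis hq hqs
  exact b.exists_affineEquiv_apply_eq b'

end CharTwo

section Kneser
variable {Ω : Type*} [DecidableEq Ω] {k : ℕ}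

lemma kneser_adj_of_disjoint {a b : KVert Ω k} (ha : a.1.Nonempty) (h : Disjoint a.1 b.1) :
    (kneser Ω k).Adj a b :=
  ⟨fun hab => ha.ne_empty (disjoint_self_iff_empty _ |>.mp (hab ▸ h)), h⟩

variable [Fintype Ω]

lemma kneser_reachable_of_card_union_le (hk : 2 * k + 1 ≤ Fintype.card Ω) {a b : KVert Ω k}
    (hab : #(a.1 ∪ b.1) ≤ k + 1) : (kneser Ω k).Reachable a b := by
  rcases eq_or_ne a b with rfl | hne
  · rfl
  have hk0 : 0 < k := by
    by_contra! h
    exact hne (Subtype.ext <| by rw [card_eq_zero.mp (a.2.trans (by omega)),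
      card_eq_zero.mp (b.2.trans (by omega))])
  obtain ⟨c, hc, hck⟩ := exists_subset_card_eq (s := (a.1 ∪ b.1)ᶜ) (n := k)
    (by rw [card_compl]; omega)
  let c' : KVert Ω k := ⟨c, hck⟩
  have hac : Disjoint a.1 c :=
    disjoint_of_subset_right hc (disjoint_compl_right.mono_left subset_union_left)
  have hbc : Disjoint b.1 c :=
    disjoint_of_subset_right hc (disjoint_compl_right.mono_left subset_union_right)
  have hne : ∀ d : KVert Ω k, d.1.Nonempty := fun d => card_pos.mp (by rw [d.2]; exact hk0)
  exact (kneser_adj_of_disjoint (b := c') (hne a) hac).reachable.trans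
    (kneser_adj_of_disjoint (b := c') (hne b) hbc).reachable.symm

theorem kneser_preconnected (hk : 2 * k + 1 ≤ Fintype.card Ω) : (kneser Ω k).Preconnected := by
  intro a b
  induction hn : #(a.1 \ b.1) using Nat.strong_induction_on generalizing a with
  | _ n ih =>
  obtain hab | ⟨x, hx⟩ := (a.1 \ b.1).eq_empty_or_nonempty
  · rw [(Subtype.ext (eq_of_subset_of_card_le (sdiff_eq_empty_iff_subset.mp hab)
      (by rw [a.2, b.2])) : a = b)]
  obtain ⟨y, hy⟩ : (b.1 \ a.1).Nonempty := by
    rw [← card_pos, card_sdiff_comm (by rw [a.2, b.2])]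
    exact card_pos.mpr ⟨x, hx⟩
  obtain ⟨hxa, hxb⟩ := mem_sdiff.mp hx
  obtain ⟨hyb, hya⟩ := mem_sdiff.mp hy
  have hya' : y ∉ a.1.erase x := fun h => hya (mem_of_mem_erase h)
  let a' : KVert Ω k := ⟨insert y (a.1.erase x), by
    rw [card_insert_of_notMem hya', card_erase_of_mem hxa, a.2]
    have := card_pos.mpr ⟨x, hxa⟩; omega⟩
  have hunion : #(a.1 ∪ a'.1) ≤ k + 1 := by
    calc #(a.1 ∪ a'.1) ≤ #(insert y a.1) := card_le_card (union_subset (subset_insert _ _)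
            (insert_subset_insert _ (erase_subset _ _)))
      _ ≤ k + 1 := (card_insert_le _ _).trans (by rw [a.2])
  have hsdiff : a'.1 \ b.1 = (a.1 \ b.1).erase x := by
    rw [insert_sdiff_of_mem _ hyb, erase_sdiff_comm]
  refine (kneser_reachable_of_card_union_le hk hunion).trans (ih _ ?_ a' rfl)
  rw [hsdiff, card_erase_of_mem hx, hn]
  have := card_pos.mpr ⟨x, hx⟩
  omega

theorem mem_nbrs_one_iff (hk : 2 * k + 1 ≤ Fintype.card Ω) {C : Set (KVert Ω k)}
    {γ : KVert Ω k} : γ ∈ nbrs C 1 ↔ γ ∉ C ∧ ∃ α ∈ C, (kneser Ω k).Adj α γ := by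
  simp only [nbrs, Set.mem_ofPred_eq, SimpleGraph.dist_eq_one_iff_adj]
  refine ⟨fun ⟨hadj, hmin⟩ => ⟨fun hγ => by simpa using hmin γ hγ, hadj⟩,
    fun ⟨hγ, hadj⟩ => ⟨hadj, fun β hβ => ?_⟩⟩
  exact (kneser_preconnected hk β γ).pos_dist_of_ne (ne_of_mem_of_not_mem hβ hγ)

end Kneser

section SumType
variable {α β : Type*}

lemma Finset.disjoint_iff_toLeft_toRight {u v : Finset (α ⊕ β)} :
    Disjoint u v ↔ Disjoint u.toLeft v.toLeft ∧ Disjoint u.toRight v.toRight := by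
  simp [disjoint_left, Sum.forall]

lemma Finset.toLeft_map_sumCongr (σ : Equiv.Perm α) (τ : Equiv.Perm β) (u : Finset (α ⊕ β)) :
    (u.map (Equiv.sumCongr σ τ).toEmbedding).toLeft = u.toLeft.map σ.toEmbedding := by
  ext; simp

lemma Finset.toRight_map_sumCongr (σ : Equiv.Perm α) (τ : Equiv.Perm β) (u : Finset (α ⊕ β)) :
    (u.map (Equiv.sumCongr σ τ).toEmbedding).toRight = u.toRight.map τ.toEmbedding := by
  ext; simp

lemma permV_sumCongr_eq [DecidableEq α] [DecidableEq β] {k : ℕ} {σ : Equiv.Perm α}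
    {τ : Equiv.Perm β} {x y : KVert (α ⊕ β) k}
    (hl : x.1.toLeft.map σ.toEmbedding = y.1.toLeft)
    (hr : x.1.toRight.map τ.toEmbedding = y.1.toRight) :
    permV (Equiv.sumCongr σ τ) x = y := by
  apply Subtype.ext
  rw [← toLeft_disjSum_toRight (u := y.1), eq_disjSum_iff]
  exact ⟨(toLeft_map_sumCongr σ τ x.1).trans hl, (toRight_map_sumCongr σ τ x.1).trans hr⟩

end SumType

lemma permV_surjective {Ω : Type*} [DecidableEq Ω] {k : ℕ} (g : Equiv.Perm Ω) :
    Function.Surjective (permV (k := k) g) :=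
  fun a => ⟨permV g⁻¹ a, Subtype.ext (by simp [permV, map_map])⟩

lemma image_permV_eq {Ω : Type*} [DecidableEq Ω] {k : ℕ} {g : Equiv.Perm Ω}
    {C : Set (KVert Ω k)} (h : ∀ α, permV g α ∈ C ↔ α ∈ C) : permV g '' C = C := by
  conv_lhs => rw [← Set.ext h]
  exact (permV_surjective g).image_preimage C

lemma sum_univ_agPt : ∑ x : AGPt, x = 0 := by decide

lemma finrank_agPt : Module.finrank (ZMod 2) AGPt = 3 := by simp

instance : DecidablePred tetra := fun s => by unfold tetra; infer_instance

lemma card_filter_tetra : #(univ.filter tetra) = 56 := by decide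

lemma tetra_image (A : AGPt ≃ᵃ[ZMod 2] AGPt) {s : Finset AGPt} (hs : tetra s) :
    tetra (s.image A) := by
  refine ⟨by rw [card_image_of_injective _ A.injective, hs.1], ?_⟩
  -- The four translation parts cancel in characteristic 2.
  have hsum := A.toAffineMap.sum_apply_eq_linear_sum_add s
  rw [hs.1, show (4 : ℕ) = 2 * 2 from rfl, mul_nsmul, ZModModule.char_nsmul_eq_zero, add_zero]
    at hsum
  simp only [AffineEquiv.coe_toAffineMap, AffineEquiv.linear_toAffineMap] at hsum
  rw [sum_image fun x _ y _ h => A.injective h, hsum]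
  exact (map_ne_zero_iff _ A.linear.injective).mpr hs.2

lemma tetra_image_iff (A : AGPt ≃ᵃ[ZMod 2] AGPt) {s : Finset AGPt} :
    tetra (s.image A) ↔ tetra s :=
  ⟨fun h => by simpa [image_image, Function.comp_def] using tetra_image A.symm h, tetra_image A⟩

lemma tetra_compl {s : Finset AGPt} (hs : tetra s) : tetra sᶜ := by
  refine ⟨by rw [card_compl, hs.1]; rfl, ?_⟩
  have := sum_compl_add_sum s fun x => x
  rw [sum_univ_agPt] at this
  rw [eq_neg_of_add_eq_zero_left this, ZModModule.neg_eq_self]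
  exact hs.2

lemma exists_frame_of_tetra {s : Finset AGPt} (hs : tetra s) :
    ∃ p : Fin 4 → AGPt, Function.Injective p ∧ ∑ i, p i ≠ 0 ∧ univ.image p = s := by
  let e := s.equivFinOfCardEq hs.1
  refine ⟨fun i => e.symm i, Subtype.val_injective.comp e.symm.injective, ?_, ?_⟩
  · rw [e.symm.sum_comp (fun x : s => (x : AGPt)), sum_coe_sort s fun x => x]
    exact hs.2
  · ext x
    simp only [mem_image, mem_univ, true_and]
    exact ⟨by rintro ⟨i, rfl⟩; exact (e.symm i).2, fun hx => ⟨e ⟨x, hx⟩, by simp⟩⟩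

lemma exists_frame_of_card_eq_three {t : Finset AGPt} (ht : #t = 3) :
    ∃ p : Fin 4 → AGPt, Function.Injective p ∧ ∑ i, p i ≠ 0 ∧ t = {p 0, p 1, p 2} := by
  obtain ⟨a, b, c, hab, hac, hbc, rfl⟩ := card_eq_three.mp ht
  obtain ⟨d, -, hd⟩ := exists_mem_notMem_of_card_lt_card
    (s := {a, b, c, a + b + c}) (t := univ) (card_le_four.trans_lt (by decide))
  simp only [mem_insert, mem_singleton, not_or] at hd
  obtain ⟨hda, hdb, hdc, hd⟩ := hd
  refine ⟨![a, b, c, d], ?_, ?_, rfl⟩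
  · intro i j hij
    fin_cases i <;> fin_cases j <;> simp_all [eq_comm]
  · rw [Fin.sum_univ_four]
    intro h
    exact hd (by simpa [ZModModule.neg_eq_self] using eq_neg_of_add_eq_zero_right h)

lemma exists_tetra_disjoint {t : Finset AGPt} (ht : #t = 3) : ∃ s, tetra s ∧ Disjoint s t := by
  have hc : #tᶜ = 5 := by rw [card_compl, ht]; rfl
  obtain ⟨x, hx, hxS⟩ := exists_mem_ne (by omega : 1 < #tᶜ) (∑ y ∈ tᶜ, y)
  refine ⟨tᶜ.erase x, ⟨by rw [card_erase_of_mem hx, hc], ?_⟩,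
    disjoint_compl_left.mono_left (erase_subset _ _)⟩
  rw [sum_erase_eq_sub hx, sub_ne_zero]
  exact hxS.symm

lemma exists_affineEquiv_image_eq_of_tetra {s t : Finset AGPt} (hs : tetra s) (ht : tetra t) :
    ∃ A : AGPt ≃ᵃ[ZMod 2] AGPt, s.image A = t := by
  obtain ⟨p, hp, hps, rfl⟩ := exists_frame_of_tetra hs
  obtain ⟨q, hq, hqs, rfl⟩ := exists_frame_of_tetra ht
  obtain ⟨A, hA⟩ := exists_affineEquiv_apply_eq_of_sum_ne_zero finrank_agPt hp hq hps hqs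
  exact ⟨A, by rw [image_image]; congr 1; exact funext hA⟩

lemma exists_affineEquiv_image_eq_of_card_eq_three {s t : Finset AGPt} (hs : #s = 3)
    (ht : #t = 3) : ∃ A : AGPt ≃ᵃ[ZMod 2] AGPt, s.image A = t := by
  obtain ⟨p, hp, hps, rfl⟩ := exists_frame_of_card_eq_three hs
  obtain ⟨q, hq, hqs, rfl⟩ := exists_frame_of_card_eq_three ht
  obtain ⟨A, hA⟩ := exists_affineEquiv_apply_eq_of_sum_ne_zero finrank_agPt hp hq hps hqs
  exact ⟨A, by simp [hA]⟩

lemma upart_eq_toLeft (s : Finset Om17) : upart s = s.toLeft := by ext; simp [upart]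

lemma vpart_eq_toRight (s : Finset Om17) : vpart s = s.toRight := by ext; simp [vpart]

def tetraCode : Set (KVert Om17 6) := {α | #α.1.toLeft = 2 ∧ tetra α.1.toRight}

def symProdAGL : Set (Equiv.Perm Om17) :=
  {g | ∃ σ : Equiv.Perm (Fin 5), ∃ A : AGPt ≃ᵃ[ZMod 2] AGPt,
    (∀ i, g (Sum.inl i) = Sum.inl (σ i)) ∧ ∀ x, g (Sum.inr x) = Sum.inr (A x)}

lemma mem_symProdAGL_iff {g : Equiv.Perm Om17} :
    g ∈ symProdAGL ↔ ∃ σ : Equiv.Perm (Fin 5), ∃ A : AGPt ≃ᵃ[ZMod 2] AGPt,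
      g = Equiv.sumCongr σ A.toEquiv := by
  refine ⟨fun ⟨σ, A, hl, hr⟩ => ⟨σ, A, Equiv.ext fun | .inl i => hl i | .inr x => hr x⟩, ?_⟩
  rintro ⟨σ, A, rfl⟩
  exact ⟨σ, A, fun _ => rfl, fun _ => rfl⟩

lemma ncard_tetraCode : tetraCode.ncard = 560 := by
  have hinj : Function.Injective fun α : KVert Om17 6 => Finset.sumEquiv α.1 :=
    Finset.sumEquiv.injective.comp Subtype.val_injective
  have himage : (fun α : KVert Om17 6 => Finset.sumEquiv α.1) '' tetraCode =
      ↑(univ.powersetCard 2 ×ˢ univ.filter tetra : Finset (Finset (Fin 5) × Finset AGPt)) := by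
    ext ⟨u, v⟩
    simp only [tetraCode, Set.mem_image, Set.mem_ofPred_eq, coe_product, Set.mem_prod, mem_coe,
      mem_powersetCard_univ, mem_filter_univ, Prod.ext_iff, sumEquiv_apply_fst, sumEquiv_apply_snd]
    constructor
    · rintro ⟨α, ⟨h2, ht⟩, rfl, rfl⟩
      exact ⟨h2, ht⟩
    · rintro ⟨h2, ht⟩
      exact ⟨⟨u.disjSum v, by rw [card_disjSum, h2, ht.1]⟩, by simp [h2, ht]⟩
  rw [← Set.ncard_image_of_injective _ hinj, himage, Set.ncard_coe_finset, card_product,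
    card_powersetCard, card_filter_tetra]
  rfl

lemma exists_adj_mem_tetraCode :
    ∃ α ∈ tetraCode, ∃ β ∈ tetraCode, (kneser Om17 6).Adj α β := by
  let s : Finset AGPt := {0, ![0, 0, 1], ![0, 1, 0], ![1, 0, 0]}
  have hs : tetra s := ⟨by decide, by decide⟩
  refine ⟨⟨({0, 1} : Finset (Fin 5)).disjSum s, by rw [card_disjSum, hs.1]; rfl⟩, ?_,
    ⟨({2, 3} : Finset (Fin 5)).disjSum sᶜ, by rw [card_disjSum, (tetra_compl hs).1]; rfl⟩, ?_,
    kneser_adj_of_disjoint ?_ ?_⟩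
  · exact ⟨by simp, by simpa using hs⟩
  · exact ⟨by simp, by simpa using tetra_compl hs⟩
  · exact ⟨.inl 0, by simp⟩
  · rw [disjoint_iff_toLeft_toRight]
    simp [disjoint_compl_right]

lemma card_parts_of_adj_mem_tetraCode {α γ : KVert Om17 6} (hα : α ∈ tetraCode)
    (hγ : γ ∉ tetraCode) (hadj : (kneser Om17 6).Adj α γ) :
    #γ.1.toLeft = 3 ∧ #γ.1.toRight = 3 := by
  obtain ⟨hl, hr⟩ := disjoint_iff_toLeft_toRight.mp hadj.2
  have hlc : #α.1.toLeftᶜ = 3 := by rw [card_compl, hα.1]; rfl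
  have hrc : #α.1.toRightᶜ = 4 := by rw [card_compl, hα.2.1]; rfl
  have hl3 : #γ.1.toLeft ≤ 3 := hlc ▸ card_le_card hl.le_compl_left
  have hr4 : #γ.1.toRight ≤ 4 := hrc ▸ card_le_card hr.le_compl_left
  have hsum : #γ.1.toLeft + #γ.1.toRight = 6 := by rw [card_toLeft_add_card_toRight, γ.2]
  have hr_ne : #γ.1.toRight ≠ 4 := fun hr4 => by
    have hr_eq : γ.1.toRight = α.1.toRightᶜ :=
      eq_of_subset_of_card_le hr.le_compl_left (by omega)
    exact hγ ⟨by omega, hr_eq ▸ tetra_compl hα.2⟩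
  omega

lemma exists_adj_of_card_parts {γ : KVert Om17 6} (hl : #γ.1.toLeft = 3)
    (hr : #γ.1.toRight = 3) : ∃ α ∈ tetraCode, (kneser Om17 6).Adj α γ := by
  obtain ⟨s, hs, hsγ⟩ := exists_tetra_disjoint hr
  have hlc : #γ.1.toLeftᶜ = 2 := by rw [card_compl, hl]; rfl
  refine ⟨⟨γ.1.toLeftᶜ.disjSum s, by rw [card_disjSum, hlc, hs.1]⟩, ⟨by simpa using hlc,
    by simpa using hs⟩, kneser_adj_of_disjoint (card_pos.mp (by simp [hlc])) ?_⟩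
  rw [disjoint_iff_toLeft_toRight]
  simpa [disjoint_compl_left] using hsγ

theorem nbrs_one_tetraCode :
    nbrs tetraCode 1 = {β | #β.1.toLeft = 3 ∧ #β.1.toRight = 3} := by
  ext γ
  rw [mem_nbrs_one_iff (by simp), Set.mem_ofPred_eq]
  refine ⟨fun ⟨hγ, α, hα, hadj⟩ => card_parts_of_adj_mem_tetraCode hα hγ hadj,
    fun ⟨hl, hr⟩ => ⟨fun hγ => ?_, exists_adj_of_card_parts hl hr⟩⟩
  have := hγ.1
  omega

lemma symProdAGL_subset_autC : symProdAGL ⊆ autC tetraCode := by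
  intro g hg
  obtain ⟨σ, A, rfl⟩ := mem_symProdAGL_iff.mp hg
  refine image_permV_eq fun α => ?_
  change #(α.1.map _).toLeft = 2 ∧ tetra (α.1.map _).toRight ↔ _
  rw [toLeft_map_sumCongr, toRight_map_sumCongr, card_map, map_eq_image]
  simp only [Equiv.coe_toEmbedding, AffineEquiv.coe_toEquiv]
  rw [tetra_image_iff]
  rfl

lemma transOn_symProdAGL {S : Set (KVert Om17 6)}
    (h : ∀ x ∈ S, ∀ y ∈ S, #x.1.toLeft = #y.1.toLeft ∧
      ∃ A : AGPt ≃ᵃ[ZMod 2] AGPt, x.1.toRight.image A = y.1.toRight) :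
    transOn symProdAGL S := by
  intro x hx y hy
  obtain ⟨hcard, A, hA⟩ := h x hx y hy
  obtain ⟨σ, hσ⟩ := Equiv.Perm.exists_map_finset_eq _ _ hcard
  exact ⟨_, mem_symProdAGL_iff.mpr ⟨σ, A, rfl⟩, permV_sumCongr_eq hσ (by rwa [map_eq_image])⟩

/-- the code of Example 5.1 in `O₇ = K(13,6)` has 560 codewords, minimum
distance 1, `C₁` consisting exactly of the vertices meeting `U` in 3 points and `V` in a
3-subset, and is neighbour-transitive for `S₅ × AGL₃(2)`. -/
theorem stmt17
    (C : Set (KVert Om17 6))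
    (hCdef : C = {α | (upart α.1).card = 2 ∧ tetra (vpart α.1)})
    (G : Set (Equiv.Perm Om17))
    (hGdef : G = {g | ∃ σ : Equiv.Perm (Fin 5), ∃ A : AGPt ≃ᵃ[ZMod 2] AGPt,
        (∀ i, g (Sum.inl i) = Sum.inl (σ i)) ∧ ∀ x, g (Sum.inr x) = Sum.inr (A x)}) :
    C.ncard = 560 ∧
    (∃ α ∈ C, ∃ β ∈ C, (kneser Om17 6).Adj α β) ∧
    nbrs C 1 = {β | (upart β.1).card = 3 ∧ (vpart β.1).card = 3} ∧
    G ⊆ autC C ∧ transOn G C ∧ transOn G (nbrs C 1) := by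
  simp only [upart_eq_toLeft, vpart_eq_toRight] at hCdef ⊢
  obtain rfl : C = tetraCode := hCdef
  obtain rfl : G = symProdAGL := hGdef
  refine ⟨ncard_tetraCode, exists_adj_mem_tetraCode, nbrs_one_tetraCode,
    symProdAGL_subset_autC, transOn_symProdAGL fun x hx y hy => ?_,
    transOn_symProdAGL fun x hx y hy => ?_⟩
  · exact ⟨hx.1.trans hy.1.symm, exists_affineEquiv_image_eq_of_tetra hx.2 hy.2⟩
  · rw [nbrs_one_tetraCode] at hx hy
    exact ⟨hx.1.trans hy.1.symm, exists_affineEquiv_image_eq_of_card_eq_three hx.2 hy.2⟩
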